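/- Let D be a combinatorial link diagram with strand set S in which the two understrands of every crossing are distinct strands, suppose D is k-meridionally colorable via a sequence of coloring moves with final coloring f : S → {1,…,k}, and let h be the height function of the associated coloring sequence. Then for every color j ∈ {1,…,k}: if the color class f^{-1}(j) is a proper subset of the connected component of S containing it, then f^{-1}(j) can be ordered as a path t₁,…,t_a with consecutive strands adjacent and in any such ordering h has a unique local maximum; if f^{-1}(j) equals an entire connected component of S, then in the cyclic ordering of that component by adjacency h has a unique local maximum (neighbors taken cyclically). In either case the unique local maximum occurs at the seed strand of color j. -/

import Mathlib

/-- A combinatorial link diagram: `n` strands and `n` crossings; each crossing has an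
(unordered, here recorded as ordered) pair of understrands and an overstrand; every
strand occurs as an understrand of exactly two crossings, counted with multiplicity. -/
structure LinkDiagram where
  n : ℕ
  Strand : Type
  Crossing : Type
  [strandFintype : Fintype Strand]
  [strandDecEq : DecidableEq Strand]
  [crossingFintype : Fintype Crossing]
  card_strand : Fintype.card Strand = n
  card_crossing : Fintype.card Crossing = n
  under1 : Crossing → Strand
  under2 : Crossing → Strand
  overstrand : Crossing → Strand
  under_twice : ∀ s : Strand,
    Nat.card {c : Crossing // under1 c = s} + Nat.card {c : Crossing // under2 c = s} = 2

attribute [instance] LinkDiagram.strandFintype LinkDiagram.strandDecEq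
  LinkDiagram.crossingFintype

namespace LinkDiagram

/-- Two strands are adjacent if they are the two understrands of a common crossing. -/
def Adj (D : LinkDiagram) (s t : D.Strand) : Prop :=
  ∃ c : D.Crossing, (D.under1 c = s ∧ D.under2 c = t) ∨ (D.under1 c = t ∧ D.under2 c = s)

/-- A subset `B` of the strands is connected if any two of its elements are joined by a
path of adjacent strands lying within `B`. -/
def ConnectedIn (D : LinkDiagram) (B : Set D.Strand) : Prop :=
  ∀ s ∈ B, ∀ t ∈ B,
    Relation.ReflTransGen (fun a b => a ∈ B ∧ b ∈ B ∧ D.Adj a b) s t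

/-- The connected component (under adjacency) of the strand `s`. -/
def component (D : LinkDiagram) (s : D.Strand) : Set D.Strand :=
  {t | Relation.ReflTransGen D.Adj s t}

/-- A witness that `D` is `k`-meridionally colorable: `k` distinct seed strands, partial
colorings `f i` at each stage `i = 0, …, n-k` (a strand not yet colored has value `none`),
where stage `0` colors the seed `j` with color `j` and nothing else, and each stage
`i → i+1` is a coloring move assigning a color to the single new strand `newStrand i`:
it is an understrand at a crossing whose other understrand and overstrand are already
colored, and it receives the color of the other understrand.  At the final stage
`n - k`, every strand is colored. -/
structure ColoringProcess (D : LinkDiagram) (k : ℕ) where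
  seed : Fin k → D.Strand
  seed_inj : Function.Injective seed
  f : ℕ → D.Strand → Option (Fin k)
  newStrand : ℕ → D.Strand
  f0_seed : ∀ j : Fin k, f 0 (seed j) = some j
  f0_none : ∀ s : D.Strand, (∀ j : Fin k, seed j ≠ s) → f 0 s = none
  move_none : ∀ i < D.n - k, f i (newStrand i) = none
  move_eq : ∀ i < D.n - k, ∀ s : D.Strand, s ≠ newStrand i → f (i + 1) s = f i s
  move_adj : ∀ i < D.n - k, ∃ c : D.Crossing, ∃ si : D.Strand,
      ((D.under1 c = newStrand i ∧ D.under2 c = si) ∨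
        (D.under1 c = si ∧ D.under2 c = newStrand i)) ∧
      (f i si).isSome ∧ (f i (D.overstrand c)).isSome ∧
      f (i + 1) (newStrand i) = f i si
  final : ∀ s : D.Strand, (f (D.n - k) s).isSome

/-- The final coloring of a coloring process. -/
def ColoringProcess.final' {D : LinkDiagram} {k : ℕ} (p : ColoringProcess D k) :
    D.Strand → Option (Fin k) :=
  p.f (D.n - k)

/-- `h` is the height function of the coloring sequence associated to the process `p`:
the `j`-th seed (j = 1, …, k) has height `-j`, and the strand colored by the `i`-th
coloring move has height `-(k + i)`. -/
def IsHeightFunction {D : LinkDiagram} {k : ℕ} (p : ColoringProcess D k)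
    (h : D.Strand → ℤ) : Prop :=
  (∀ j : Fin k, h (p.seed j) = -((j : ℕ) + 1 : ℤ)) ∧
  (∀ i < D.n - k, h (p.newStrand i) = -((k : ℤ) + (i : ℕ) + 1))

end LinkDiagram

namespace LinkDiagram

/-- `t : Fin a → Strand` is an ordering of the set `C` as a sequence in which consecutive
strands are adjacent. -/
def IsPathOrdering (D : LinkDiagram) (C : Set D.Strand) (a : ℕ) (t : Fin a → D.Strand) :
    Prop :=
  Function.Injective t ∧ Set.range t = C ∧
    ∀ i : Fin a, ∀ hi : (i : ℕ) + 1 < a, D.Adj (t i) (t ⟨(i : ℕ) + 1, hi⟩)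

/-- `hgt` has a local maximum at position `m` of the ordering `t`: the value at `m` is
greater than the value at each neighbouring position. -/
def IsPathLocalMax (D : LinkDiagram) (hgt : D.Strand → ℤ) (a : ℕ) (t : Fin a → D.Strand)
    (m : Fin a) : Prop :=
  (∀ hm : (m : ℕ) + 1 < a, hgt (t ⟨(m : ℕ) + 1, hm⟩) < hgt (t m)) ∧
  (0 < (m : ℕ) →
    hgt (t ⟨(m : ℕ) - 1, lt_of_le_of_lt (Nat.sub_le _ _) m.isLt⟩) < hgt (t m))

end LinkDiagram

namespace LinkDiagram

/-- `t : Fin a → Strand` is a cyclic ordering of the set `C` by adjacency. -/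
def IsCycleOrdering (D : LinkDiagram) (C : Set D.Strand) (a : ℕ) (ha : 0 < a)
    (t : Fin a → D.Strand) : Prop :=
  Function.Injective t ∧ Set.range t = C ∧
    ∀ i : Fin a, D.Adj (t i) (t ⟨((i : ℕ) + 1) % a, Nat.mod_lt _ ha⟩)

/-- `hgt` has a local maximum at position `m` of the cyclic ordering `t` (neighbours
taken cyclically). -/
def IsCycLocalMax (D : LinkDiagram) (hgt : D.Strand → ℤ) (a : ℕ) (ha : 0 < a)
    (t : Fin a → D.Strand) (m : Fin a) : Prop :=
  hgt (t ⟨((m : ℕ) + 1) % a, Nat.mod_lt _ ha⟩) < hgt (t m) ∧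
  hgt (t ⟨((m : ℕ) + a - 1) % a, Nat.mod_lt _ ha⟩) < hgt (t m)

end LinkDiagram

/-!
Every strand of colour `j` other than the seed was coloured across a crossing from an adjacent
strand of colour `j` coloured earlier, hence higher; the seed is the highest strand of its colour.
Every strand is an understrand of exactly two crossings, so it has at most two neighbours; hence a
colour class grows as a path, new strands being attached at its ends. In a path ordering, the
higher neighbour of a local maximum `s` other than the seed is not next to `s` in the ordering,
so by the degree bound `s` and it are the two ends of the path. Adjacent ends make the ordering a
cycle, which is then closed under adjacency: the colour class is a whole component. Conversely,
for a whole component the path does close up, because a strand whose crossings are all shared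
with one strand `u` uses up both crossings of `u`.
-/

theorem Nat.add_one_mod_cases {m a : ℕ} (h : m < a) :
    m + 1 < a ∧ (m + 1) % a = m + 1 ∨ m + 1 = a ∧ (m + 1) % a = 0 := by
  rcases Nat.lt_or_ge (m + 1) a with h' | h'
  · exact .inl ⟨h', Nat.mod_eq_of_lt h'⟩
  · exact .inr ⟨by omega, by rw [show m + 1 = a by omega, Nat.mod_self]⟩

theorem Nat.add_sub_one_mod_cases {m a : ℕ} (h : m < a) :
    0 < m ∧ (m + a - 1) % a = m - 1 ∨ m = 0 ∧ (m + a - 1) % a = a - 1 := by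
  rcases Nat.eq_zero_or_pos m with rfl | hm
  · exact .inr ⟨rfl, by rw [Nat.zero_add, Nat.mod_eq_of_lt (by omega)]⟩
  · refine .inl ⟨hm, ?_⟩
    rw [show m + a - 1 = m - 1 + a by omega, Nat.add_mod_right, Nat.mod_eq_of_lt (by omega)]

theorem Function.Injective.existsUnique_of_forall_iff {ι β : Type*} {t : ι → β}
    (ht : Function.Injective t) {x : β} (hx : x ∈ Set.range t) {P : ι → Prop}
    (hP : ∀ m, P m ↔ t m = x) : ∃! m, P m :=
  (existsUnique_congr hP).mpr (ht.existsUnique_of_mem_range hx)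

namespace SimpleGraph

variable {α : Type*} (G : SimpleGraph α)

def AtMostTwoNeighbors : Prop :=
  ∀ ⦃s u v w : α⦄, G.Adj s u → G.Adj s v → G.Adj s w → u = v ∨ u = w ∨ v = w

variable {G} {a : ℕ} {t : Fin a → α}

theorem adj_add_one_mod_of_chain
    (hchain : ∀ i : Fin a, ∀ hi : (i : ℕ) + 1 < a, G.Adj (t i) (t ⟨i + 1, hi⟩))
    (ha : 0 < a) (hclose : G.Adj (t ⟨a - 1, by omega⟩) (t ⟨0, ha⟩)) (i : Fin a) :
    G.Adj (t i) (t ⟨(i + 1) % a, Nat.mod_lt _ ha⟩) := by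
  rcases Nat.add_one_mod_cases i.2 with ⟨hi, hmod⟩ | ⟨hi, hmod⟩
  · simpa only [hmod] using hchain i hi
  · convert hclose using 3; omega

theorem adj_add_sub_one_mod_of_cycle (ha : 0 < a)
    (hcyc : ∀ i : Fin a, G.Adj (t i) (t ⟨(i + 1) % a, Nat.mod_lt _ ha⟩)) (m : Fin a) :
    G.Adj (t m) (t ⟨(m + a - 1) % a, Nat.mod_lt _ ha⟩) := by
  convert (hcyc ⟨(m + a - 1) % a, Nat.mod_lt _ ha⟩).symm using 3
  rcases Nat.add_sub_one_mod_cases m.2 with ⟨hm, h⟩ | ⟨hm, h⟩ <;> simp only [h]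
  · rw [Nat.sub_add_cancel hm, Nat.mod_eq_of_lt m.2]
  · rw [Nat.sub_add_cancel ha, Nat.mod_self, hm]

theorem adj_of_chain
    (hchain : ∀ i : Fin a, ∀ hi : (i : ℕ) + 1 < a, G.Adj (t i) (t ⟨i + 1, hi⟩))
    {i j : Fin a} (h : (j : ℕ) = i + 1) : G.Adj (t i) (t j) := by
  obtain ⟨j, hj⟩ := j
  obtain rfl : j = i + 1 := h
  exact hchain i hj

namespace AtMostTwoNeighbors

variable (hG : G.AtMostTwoNeighbors)
include hG

theorem exists_isChain_insert {L : List α}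
    (hnd : L.Nodup) (hL : L.IsChain G.Adj) {x y : α} (hx : x ∈ L) (hy : y ∉ L)
    (hxy : G.Adj x y) :
    ∃ L' : List α, L'.Nodup ∧ L'.IsChain G.Adj ∧ ∀ z, z ∈ L' ↔ z = y ∨ z ∈ L := by
  obtain ⟨L₁, L₂, rfl⟩ := List.append_of_mem hx
  rcases L₁.eq_nil_or_concat with rfl | ⟨L₁, b, rfl⟩
  · exact ⟨y :: x :: L₂, by simp_all, hL.cons_cons hxy.symm, by simp⟩
  rcases L₂ with _ | ⟨c, L₂⟩
  · refine ⟨L₁ ++ [b, x] ++ [y], ?_, ?_, fun z => by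
      simp only [List.concat_eq_append, List.mem_append, List.mem_cons,
        List.not_mem_nil, or_false]
      tauto⟩
    · rw [List.nodup_append_comm]
      simp_all
    · simp_all
  · exfalso
    simp only [List.concat_eq_append, List.append_assoc, List.cons_append, List.nil_append,
      List.isChain_append_cons_cons, List.isChain_cons_cons] at hL
    rcases hG hL.2.1.symm hL.2.2.1 hxy with rfl | rfl | rfl <;> simp_all [List.nodup_append]

theorem eq_of_adj_of_cycle (ht : Function.Injective t) (ha : 0 < a) (ha₃ : 3 ≤ a)
    (hcyc : ∀ i : Fin a, G.Adj (t i) (t ⟨(i + 1) % a, Nat.mod_lt _ ha⟩))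
    (m : Fin a) {w : α} (hw : G.Adj (t m) w) :
    w = t ⟨(m + 1) % a, Nat.mod_lt _ ha⟩ ∨ w = t ⟨(m + a - 1) % a, Nat.mod_lt _ ha⟩ := by
  rcases hG (hcyc m) (adj_add_sub_one_mod_of_cycle ha hcyc m) hw with h | h | h
  · have := congrArg Fin.val (ht h)
    simp only at this
    rcases Nat.add_one_mod_cases m.2 with ⟨_, h₁⟩ | ⟨_, h₁⟩ <;>
      rcases Nat.add_sub_one_mod_cases m.2 with ⟨_, h₂⟩ | ⟨_, h₂⟩ <;> omega
  · exact .inl h.symm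
  · exact .inr h.symm

variable (ht : Function.Injective t)
    (hchain : ∀ i : Fin a, ∀ hi : (i : ℕ) + 1 < a, G.Adj (t i) (t ⟨i + 1, hi⟩))
include ht hchain

theorem eq_of_adj_of_chain {m : ℕ} (hm₀ : 0 < m) (hm : m + 1 < a) {w : α}
    (hw : G.Adj (t ⟨m, by omega⟩) w) : w = t ⟨m - 1, by omega⟩ ∨ w = t ⟨m + 1, hm⟩ := by
  have hprev : G.Adj (t ⟨m, by omega⟩) (t ⟨m - 1, by omega⟩) :=
    (adj_of_chain hchain (by simp only; omega)).symm
  rcases hG hprev (hchain ⟨m, by omega⟩ hm) hw with h | h | h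
  · exact absurd (ht h) (by simp)
  · exact .inl h.symm
  · exact .inr h.symm

theorem index_of_adj_of_chain {i m : Fin a} (h : G.Adj (t m) (t i)) :
    (i : ℕ) = m + 1 ∨ (m : ℕ) = i + 1 ∨
      ((i : ℕ) = 0 ∧ (m : ℕ) = a - 1) ∨ ((m : ℕ) = 0 ∧ (i : ℕ) = a - 1) := by
  have hne : (i : ℕ) ≠ m := fun e => h.ne (congrArg t (Fin.ext e.symm))
  by_cases hm : 0 < (m : ℕ) ∧ (m : ℕ) + 1 < a
  · rcases hG.eq_of_adj_of_chain ht hchain hm.1 hm.2 h with e | e <;>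
      have := congrArg Fin.val (ht e) <;> simp only at this <;> omega
  by_cases hi : 0 < (i : ℕ) ∧ (i : ℕ) + 1 < a
  · rcases hG.eq_of_adj_of_chain ht hchain hi.1 hi.2 h.symm with e | e <;>
      have := congrArg Fin.val (ht e) <;> simp only at this <;> omega
  omega

/-- `hleaf` holds for the simple graph underlying a multigraph in which every vertex has degree
two: a double edge is a whole component. -/
theorem adj_last_first_of_chain
    (hleaf : ∀ ⦃s u : α⦄, G.Adj s u → (∀ v, G.Adj s v → v = u) → ∀ v, G.Adj u v → v = s)
    (hclosed : ∀ x : Fin a, ∀ w, G.Adj (t x) w → w ∈ Set.range t) (ha : 2 ≤ a) :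
    G.Adj (t ⟨a - 1, by omega⟩) (t ⟨0, by omega⟩) := by
  have hlast : G.Adj (t ⟨a - 2, by omega⟩) (t ⟨a - 1, by omega⟩) :=
    adj_of_chain hchain (by simp only; omega)
  by_cases hbranch : ∃ w, G.Adj (t ⟨a - 1, by omega⟩) w ∧ w ≠ t ⟨a - 2, by omega⟩
  · obtain ⟨w, hw, hne⟩ := hbranch
    obtain ⟨x, rfl⟩ := hclosed _ w hw
    have hx := hG.index_of_adj_of_chain ht hchain hw
    simp only at hx
    have hx0 : x = ⟨0, by omega⟩ := by
      refine Fin.ext ?_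
      rcases hx with hx | hx | hx | hx
      · omega
      · exact absurd (congrArg t (Fin.ext (by simp only; omega))) hne
      · exact hx.1
      · omega
    rwa [← hx0]
  push Not at hbranch
  have hpen := hleaf hlast.symm hbranch
  rcases Nat.lt_or_ge a 3 with ha₂ | ha₃
  · convert hlast.symm using 3; omega
  · have hprev : G.Adj (t ⟨a - 2, by omega⟩) (t ⟨a - 3, by omega⟩) :=
      (adj_of_chain hchain (by simp only; omega)).symm
    have := congrArg Fin.val (ht (hpen _ hprev))
    simp only at this
    omega

end AtMostTwoNeighbors

end SimpleGraph

namespace LinkDiagram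

variable {D : LinkDiagram}

theorem Adj.symm {s u : D.Strand} (h : D.Adj s u) : D.Adj u s :=
  let ⟨c, hc⟩ := h; ⟨c, hc.symm⟩

def crossingsAt (D : LinkDiagram) (s : D.Strand) : Finset D.Crossing :=
  Finset.univ.filter fun c => D.under1 c = s ∨ D.under2 c = s

def otherUnder (D : LinkDiagram) (c : D.Crossing) (s : D.Strand) : D.Strand :=
  if D.under1 c = s then D.under2 c else D.under1 c

theorem adj_iff_exists_otherUnder {s u : D.Strand} :
    D.Adj s u ↔ ∃ c ∈ D.crossingsAt s, D.otherUnder c s = u := by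
  simp only [Adj, crossingsAt, otherUnder, Finset.mem_filter, Finset.mem_univ, true_and]
  grind

section DistinctUnderstrands

variable (hdist : ∀ c : D.Crossing, D.under1 c ≠ D.under2 c)
include hdist

theorem card_crossingsAt (s : D.Strand) : (D.crossingsAt s).card = 2 := by
  classical
  rw [crossingsAt, Finset.filter_or, Finset.card_union_of_disjoint, ← D.under_twice s,
    Nat.card_eq_fintype_card, Fintype.card_subtype, Nat.card_eq_fintype_card,
    Fintype.card_subtype]
  exact Finset.disjoint_filter.mpr fun c _ h₁ h₂ => hdist c (h₁.trans h₂.symm)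

theorem mem_crossingsAt_otherUnder {c : D.Crossing} {s : D.Strand} (hc : c ∈ D.crossingsAt s) :
    c ∈ D.crossingsAt (D.otherUnder c s) ∧ D.otherUnder c (D.otherUnder c s) = s := by
  have := hdist c
  simp only [crossingsAt, otherUnder, Finset.mem_filter, Finset.mem_univ, true_and] at hc ⊢
  grind

def adjGraph : SimpleGraph D.Strand where
  Adj := D.Adj
  symm := ⟨fun _ _ => Adj.symm⟩
  loopless := ⟨fun s ⟨c, hc⟩ => hdist c (by rcases hc with h | h <;> exact h.1.trans h.2.symm)⟩

theorem adjGraph_atMostTwoNeighbors : (adjGraph hdist).AtMostTwoNeighbors := by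
  classical
  intro s u v w hu hv hw
  have hsub : {u, v, w} ⊆ (D.crossingsAt s).image (D.otherUnder · s) := by
    intro x hx
    simp only [Finset.mem_insert, Finset.mem_singleton] at hx
    rw [Finset.mem_image]
    rcases hx with rfl | rfl | rfl <;> exact adj_iff_exists_otherUnder.mp ‹_›
  by_contra! hne
  have := (Finset.card_le_card hsub).trans Finset.card_image_le
  rw [card_crossingsAt hdist, Finset.card_eq_three.mpr ⟨u, v, w, hne.1, hne.2.1, hne.2.2, rfl⟩]
    at this
  omega

theorem exists_adj (s : D.Strand) : ∃ u, D.Adj s u := by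
  obtain ⟨c, hc⟩ := Finset.card_pos.mp (by rw [card_crossingsAt hdist s]; omega)
  exact ⟨_, adj_iff_exists_otherUnder.mpr ⟨c, hc, rfl⟩⟩

theorem eq_of_adj_of_forall_adj_eq {s u v : D.Strand}
    (honly : ∀ w, D.Adj s w → w = u) (huv : D.Adj u v) : v = s := by
  have hsub : D.crossingsAt s ⊆ D.crossingsAt u := fun c hc => by
    simpa [honly _ (adj_iff_exists_otherUnder.mpr ⟨c, hc, rfl⟩)] using
      (mem_crossingsAt_otherUnder hdist hc).1
  have heq : D.crossingsAt s = D.crossingsAt u :=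
    Finset.eq_of_subset_of_card_le hsub (by rw [card_crossingsAt hdist, card_crossingsAt hdist])
  obtain ⟨c, hc, rfl⟩ := adj_iff_exists_otherUnder.mp huv
  rw [← heq] at hc
  have := (mem_crossingsAt_otherUnder hdist hc).2
  rwa [honly _ (adj_iff_exists_otherUnder.mpr ⟨c, hc, rfl⟩)] at this

end DistinctUnderstrands

namespace ColoringProcess

variable {k : ℕ} (p : ColoringProcess D k)

theorem f_eq_of_le {i i' : ℕ} (hle : i ≤ i') (hi' : i' ≤ D.n - k) {s : D.Strand}
    (hs : (p.f i s).isSome) : p.f i' s = p.f i s := by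
  induction i', hle using Nat.le_induction with
  | base => rfl
  | succ i' hle ih =>
    have hne : s ≠ p.newStrand i' := by
      rintro rfl
      simp [← ih (by omega), p.move_none i' (by omega)] at hs
    rw [p.move_eq i' (by omega) s hne, ih (by omega)]

theorem final'_seed (j : Fin k) : p.final' (p.seed j) = some j := by
  rw [final', p.f_eq_of_le (Nat.zero_le _) le_rfl (by simp [p.f0_seed]), p.f0_seed]

theorem isSome_f_iff {i : ℕ} (hi : i ≤ D.n - k) (s : D.Strand) :
    (p.f i s).isSome ↔ (∃ j, p.seed j = s) ∨ ∃ i' < i, p.newStrand i' = s := by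
  induction i with
  | zero =>
    simp only [Nat.not_lt_zero, false_and, exists_false, or_false]
    refine ⟨fun hs => ?_, fun ⟨j, hj⟩ => by simp [← hj, p.f0_seed]⟩
    by_contra! hseed
    simp [p.f0_none s hseed] at hs
  | succ i ih =>
    obtain ⟨c, si, -, hsi, -, hnew⟩ := p.move_adj i (by omega)
    by_cases hs : s = p.newStrand i
    · subst hs
      simp only [hnew, hsi, true_iff]
      exact .inr ⟨i, by omega, rfl⟩
    · rw [p.move_eq i (by omega) s hs, ih (by omega)]
      simp only [Nat.lt_succ_iff_lt_or_eq, or_and_right, exists_or]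
      grind

theorem exists_newStrand_eq_of_final' {s : D.Strand} {j : Fin k}
    (hs : p.final' s = some j) (hne : s ≠ p.seed j) :
    ∃ i < D.n - k, p.newStrand i = s := by
  rcases (p.isSome_f_iff le_rfl s).mp (by simp [hs] : (p.final' s).isSome) with ⟨j', rfl⟩ | hnew
  · rw [p.final'_seed, Option.some_inj] at hs
    exact absurd (congrArg p.seed hs) hne
  · exact hnew

theorem f_zero_eq_some_iff {s : D.Strand} {j : Fin k} : p.f 0 s = some j ↔ s = p.seed j := by
  refine ⟨fun hs => ?_, fun hs => hs ▸ p.f0_seed j⟩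
  by_cases hseed : ∃ j', p.seed j' = s
  · obtain ⟨j', rfl⟩ := hseed
    rw [p.f0_seed, Option.some_inj] at hs
    rw [hs]
  · push Not at hseed
    simp [p.f0_none s hseed] at hs

theorem exists_list_colorClass (hdist : ∀ c : D.Crossing, D.under1 c ≠ D.under2 c)
    (j : Fin k) :
    ∃ L : List D.Strand, L.Nodup ∧ L.IsChain D.Adj ∧ ∀ s, s ∈ L ↔ p.final' s = some j := by
  suffices ∀ i ≤ D.n - k, ∃ L : List D.Strand, L.Nodup ∧ L.IsChain D.Adj ∧
      ∀ s, s ∈ L ↔ p.f i s = some j from this _ le_rfl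
  intro i hi
  induction i with
  | zero => exact ⟨[p.seed j], List.nodup_singleton _, .singleton _, fun s => by
      simp [p.f_zero_eq_some_iff]⟩
  | succ i ih =>
    obtain ⟨L, hnd, hL, hmem⟩ := ih (by omega)
    obtain ⟨c, si, hc, -, -, hnew⟩ := p.move_adj i (by omega)
    have hstep : ∀ s ≠ p.newStrand i, p.f (i + 1) s = p.f i s := p.move_eq i (by omega)
    by_cases hsi : p.f i si = some j
    · obtain ⟨L', hnd', hL', hmem'⟩ := (adjGraph_atMostTwoNeighbors hdist).exists_isChain_insert
        hnd hL ((hmem si).mpr hsi) (by simp [hmem, p.move_none i (by omega)])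
        (show D.Adj si (p.newStrand i) from ⟨c, hc.symm⟩)
      refine ⟨L', hnd', hL', fun s => ?_⟩
      by_cases hs : s = p.newStrand i
      · simp [hmem', hs, hnew, hsi]
      · simp [hmem', hs, hmem, hstep s hs]
    · refine ⟨L, hnd, hL, fun s => ?_⟩
      by_cases hs : s = p.newStrand i
      · simp [hmem, hs, hnew, hsi, p.move_none i (by omega)]
      · rw [hmem, hstep s hs]

theorem exists_isPathOrdering_colorClass (hdist : ∀ c : D.Crossing, D.under1 c ≠ D.under2 c)
    (j : Fin k) :
    ∃ (a : ℕ) (_ : 0 < a) (t : Fin a → D.Strand),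
      D.IsPathOrdering {s : D.Strand | p.final' s = some j} a t := by
  obtain ⟨L, hnd, hL, hmem⟩ := p.exists_list_colorClass hdist j
  exact ⟨L.length, List.length_pos_of_mem ((hmem _).mpr (p.final'_seed j)), L.get,
    List.nodup_iff_injective_get.mp hnd, Set.ext fun s => by simp [hmem],
    fun i hi => List.isChain_iff_getElem.mp hL i hi⟩

variable {h : D.Strand → ℤ} (hh : IsHeightFunction p h)
include hh

theorem neg_le_height {i : ℕ} (hi : i ≤ D.n - k) {s : D.Strand} (hs : (p.f i s).isSome) :
    -((k : ℤ) + i) ≤ h s := by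
  rcases (p.isSome_f_iff hi s).mp hs with ⟨j, rfl⟩ | ⟨i', hi', rfl⟩
  · rw [hh.1 j]
    omega
  · rw [hh.2 i' (by omega)]
    omega

theorem height_lt_seed {s : D.Strand} {j : Fin k} (hs : p.final' s = some j)
    (hne : s ≠ p.seed j) : h s < h (p.seed j) := by
  obtain ⟨i, hi, rfl⟩ := p.exists_newStrand_eq_of_final' hs hne
  rw [hh.2 i hi, hh.1 j]
  omega

theorem exists_adj_height_lt {s : D.Strand} {j : Fin k} (hs : p.final' s = some j)
    (hne : s ≠ p.seed j) : ∃ u, p.final' u = some j ∧ D.Adj s u ∧ h s < h u := by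
  obtain ⟨i, hi, rfl⟩ := p.exists_newStrand_eq_of_final' hs hne
  obtain ⟨c, si, hc, hsi, -, hnew⟩ := p.move_adj i hi
  have hsij : p.f i si = some j := by
    rw [← hnew, ← p.f_eq_of_le (Nat.succ_le_of_lt hi) le_rfl (by rwa [hnew])]
    exact hs
  refine ⟨si, ?_, ⟨c, hc⟩, ?_⟩
  · rw [final', p.f_eq_of_le hi.le le_rfl hsi, hsij]
  · have := p.neg_le_height hh hi.le hsi
    rw [hh.2 i hi]
    omega

end ColoringProcess

theorem component_subset {C : Set D.Strand} {s : D.Strand} (hs : s ∈ C)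
    (hC : ∀ x ∈ C, ∀ w, D.Adj x w → w ∈ C) : D.component s ⊆ C := fun _ hx => by
  induction hx with
  | refl => exact hs
  | tail _ hadj ih => exact hC _ ih _ hadj

section Orderings

variable {C : Set D.Strand} {x₀ : D.Strand} {hgt : D.Strand → ℤ} {a : ℕ} {t : Fin a → D.Strand}
  (hdist : ∀ c : D.Crossing, D.under1 c ≠ D.under2 c)
include hdist

theorem IsPathOrdering.isCycleOrdering (hC : ∀ x ∈ C, ∀ w, D.Adj x w → w ∈ C)
    (ht : D.IsPathOrdering C a t) (ha : 0 < a) : D.IsCycleOrdering C a ha t := by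
  obtain ⟨u, hu⟩ := exists_adj hdist (t ⟨0, ha⟩)
  obtain ⟨x, rfl⟩ : u ∈ Set.range t := ht.2.1 ▸ hC _ (ht.2.1 ▸ ⟨_, rfl⟩) u hu
  have ha₂ : 2 ≤ a := by
    by_contra! ha₁
    rw [show x = ⟨0, ha⟩ from Fin.ext (by omega)] at hu
    exact (show (adjGraph hdist).Adj _ _ from hu).ne rfl
  refine ⟨ht.1, ht.2.1, SimpleGraph.adj_add_one_mod_of_chain (G := adjGraph hdist) ht.2.2 ha ?_⟩
  exact (adjGraph_atMostTwoNeighbors hdist).adj_last_first_of_chain ht.1 ht.2.2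
    (fun _ _ _ honly _ => eq_of_adj_of_forall_adj_eq hdist honly)
    (fun x w hw => ht.2.1 ▸ hC _ (ht.2.1 ▸ ⟨x, rfl⟩) w hw) ha₂

theorem IsPathOrdering.not_adj_last_first (hopen : ¬ ∀ x ∈ C, ∀ w, D.Adj x w → w ∈ C)
    (ht : D.IsPathOrdering C a t) (ha : 3 ≤ a) :
    ¬ D.Adj (t ⟨a - 1, by omega⟩) (t ⟨0, by omega⟩) := by
  intro hclose
  refine hopen fun _ hs w hw => ?_
  obtain ⟨x, rfl⟩ : _ ∈ Set.range t := ht.2.1 ▸ hs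
  have hcyc := SimpleGraph.adj_add_one_mod_of_chain (G := adjGraph hdist) ht.2.2 (by omega) hclose
  rcases (adjGraph_atMostTwoNeighbors hdist).eq_of_adj_of_cycle ht.1 (by omega) ha hcyc x hw
    with h | h <;> exact ht.2.1 ▸ ⟨_, h.symm⟩

theorem IsPathOrdering.isPathLocalMax_iff
    (hpar : ∀ s ∈ C, s ≠ x₀ → ∃ u ∈ C, D.Adj s u ∧ hgt s < hgt u)
    (hmax : ∀ s ∈ C, s ≠ x₀ → hgt s < hgt x₀) (hopen : ¬ ∀ x ∈ C, ∀ w, D.Adj x w → w ∈ C)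
    (ht : D.IsPathOrdering C a t) (m : Fin a) : D.IsPathLocalMax hgt a t m ↔ t m = x₀ := by
  have hmem : ∀ x, t x ∈ C := fun x => ht.2.1 ▸ ⟨x, rfl⟩
  refine ⟨fun hm => ?_, fun hm => ?_⟩
  · by_contra hne
    obtain ⟨_, hu, hadj, hlt⟩ := hpar _ (hmem m) hne
    obtain ⟨i, rfl⟩ : _ ∈ Set.range t := ht.2.1 ▸ hu
    have hself : (i : ℕ) ≠ m := fun e => hlt.ne (by rw [Fin.ext e])
    have hnext : (i : ℕ) ≠ m + 1 := fun e => by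
      have := hm.1 (by omega)
      rw [show (⟨m + 1, _⟩ : Fin a) = i from Fin.ext e.symm] at this
      exact lt_asymm hlt this
    have hprev : (m : ℕ) ≠ i + 1 := fun e => by
      have := hm.2 (by omega)
      rw [show (⟨m - 1, _⟩ : Fin a) = i from Fin.ext (by simp only; omega)] at this
      exact lt_asymm hlt this
    have hidx := (adjGraph_atMostTwoNeighbors hdist).index_of_adj_of_chain ht.1 ht.2.2 hadj
    rcases hidx with _ | _ | ⟨hi, hm'⟩ | ⟨hm', hi⟩
    · omega
    · omega
    · refine ht.not_adj_last_first hdist hopen (by omega) ?_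
      convert hadj using 3 <;> omega
    · refine ht.not_adj_last_first hdist hopen (by omega) ?_
      convert hadj.symm using 3 <;> omega
  · have hne : ∀ x : Fin a, (x : ℕ) ≠ m → t x ≠ x₀ :=
      fun x hx e => hx (congrArg Fin.val (ht.1 (e.trans hm.symm)))
    exact ⟨fun _ => hm ▸ hmax _ (hmem _) (hne _ (by simp only; omega)),
      fun _ => hm ▸ hmax _ (hmem _) (hne _ (by simp only; omega))⟩

theorem IsCycleOrdering.isCycLocalMax_iff
    (hpar : ∀ s ∈ C, s ≠ x₀ → ∃ u ∈ C, D.Adj s u ∧ hgt s < hgt u)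
    (hmax : ∀ s ∈ C, s ≠ x₀ → hgt s < hgt x₀) {ha : 0 < a} (ht : D.IsCycleOrdering C a ha t)
    (m : Fin a) : D.IsCycLocalMax hgt a ha t m ↔ t m = x₀ := by
  have hmem : ∀ x, t x ∈ C := fun x => ht.2.1 ▸ ⟨x, rfl⟩
  have hnext : (adjGraph hdist).Adj (t m) (t ⟨(m + 1) % a, Nat.mod_lt _ ha⟩) := ht.2.2 m
  have hprev := SimpleGraph.adj_add_sub_one_mod_of_cycle (G := adjGraph hdist) ha ht.2.2 m
  refine ⟨fun hm => ?_, fun hm => ⟨hm ▸ hmax _ (hmem _) fun e => hnext.ne (hm.trans e.symm),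
    hm ▸ hmax _ (hmem _) fun e => hprev.ne (hm.trans e.symm)⟩⟩
  by_contra hne
  obtain ⟨_, hu, hadj, hlt⟩ := hpar _ (hmem m) hne
  obtain ⟨i, rfl⟩ : _ ∈ Set.range t := ht.2.1 ▸ hu
  have hself : (i : ℕ) ≠ m := fun e => hlt.ne (by rw [Fin.ext e])
  have hinext : (i : ℕ) ≠ (m + 1) % a := fun e =>
    lt_asymm hlt (by rw [show i = ⟨(m + 1) % a, Nat.mod_lt _ ha⟩ from Fin.ext e]; exact hm.1)
  have hiprev : (i : ℕ) ≠ (m + a - 1) % a := fun e =>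
    lt_asymm hlt (by rw [show i = ⟨(m + a - 1) % a, Nat.mod_lt _ ha⟩ from Fin.ext e]; exact hm.2)
  rcases Nat.lt_or_ge a 3 with ha₃ | ha₃
  · rcases Nat.add_one_mod_cases m.2 with ⟨_, h⟩ | ⟨_, h⟩ <;> omega
  · rcases (adjGraph_atMostTwoNeighbors hdist).eq_of_adj_of_cycle ht.1 ha ha₃ ht.2.2 m hadj
      with e | e <;> have := congrArg Fin.val (ht.1 e) <;> simp only at this <;> omega

end Orderings

end LinkDiagram

/-- Let `D` be a link diagram with distinct understrands at every
crossing, `k`-meridionally colorable, with final coloring `p.final'` and height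
function `h`.  For every color `j`: if the color class is a proper subset of the
connected component containing it, it can be ordered as a path with consecutive strands
adjacent, and in any such ordering `h` has a unique local maximum, at the seed of
color `j`; if the color class is an entire connected component, then in the cyclic
ordering of that component by adjacency `h` has a unique local maximum (neighbours
taken cyclically), again at the seed of color `j`. -/
theorem wirtinger_link_unique_localMax (D : LinkDiagram)
    (hdist : ∀ c : D.Crossing, D.under1 c ≠ D.under2 c)
    (k : ℕ) (p : LinkDiagram.ColoringProcess D k)
    (h : D.Strand → ℤ) (hh : LinkDiagram.IsHeightFunction p h) (j : Fin k) :
    ({s : D.Strand | p.final' s = some j} ⊂ D.component (p.seed j) →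
      (∃ (a : ℕ) (t : Fin a → D.Strand),
          D.IsPathOrdering {s : D.Strand | p.final' s = some j} a t) ∧
      (∀ (a : ℕ) (t : Fin a → D.Strand),
          D.IsPathOrdering {s : D.Strand | p.final' s = some j} a t →
          (∃! m : Fin a, D.IsPathLocalMax h a t m) ∧
          (∀ m : Fin a, D.IsPathLocalMax h a t m → t m = p.seed j))) ∧
    ({s : D.Strand | p.final' s = some j} = D.component (p.seed j) →
      (∃ (a : ℕ) (ha : 0 < a) (t : Fin a → D.Strand),
          D.IsCycleOrdering {s : D.Strand | p.final' s = some j} a ha t) ∧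
      (∀ (a : ℕ) (ha : 0 < a) (t : Fin a → D.Strand),
          D.IsCycleOrdering {s : D.Strand | p.final' s = some j} a ha t →
          (∃! m : Fin a, D.IsCycLocalMax h a ha t m) ∧
          (∀ m : Fin a, D.IsCycLocalMax h a ha t m → t m = p.seed j))) := by
  obtain ⟨a₀, ha₀, t₀, hpath⟩ := p.exists_isPathOrdering_colorClass hdist j
  set C := {s : D.Strand | p.final' s = some j}
  have hseed : p.seed j ∈ C := p.final'_seed j
  have hpar : ∀ s ∈ C, s ≠ p.seed j → ∃ u ∈ C, D.Adj s u ∧ h s < h u :=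
    fun _ hs hne => p.exists_adj_height_lt hh hs hne
  have hmax : ∀ s ∈ C, s ≠ p.seed j → h s < h (p.seed j) :=
    fun _ hs hne => p.height_lt_seed hh hs hne
  refine ⟨fun hsub => ⟨⟨a₀, t₀, hpath⟩, fun a t ht => ?_⟩,
    fun hcomp => ⟨⟨a₀, ha₀, t₀, ?_⟩, fun a ha t ht => ?_⟩⟩
  · have hiff := ht.isPathLocalMax_iff hdist hpar hmax
      fun hclosed => hsub.2 (LinkDiagram.component_subset hseed hclosed)
    exact ⟨ht.1.existsUnique_of_forall_iff (ht.2.1 ▸ hseed) hiff, fun m => (hiff m).mp⟩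
  · refine hpath.isCycleOrdering hdist (fun x hx w hw => ?_) ha₀
    rw [hcomp] at hx ⊢
    exact hx.tail hw
  · have hiff := ht.isCycLocalMax_iff hdist hpar hmax
    exact ⟨ht.1.existsUnique_of_forall_iff (ht.2.1 ▸ hseed) hiff, fun m => (hiff m).mp⟩
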